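/- The β-distance d_β(A,B) := (2√(1/n−β)/|β|)·( (det(A)^{β/2} − det(B)^{β/2})² + 4(det A · det B)^{β/2} sin²(γ/2) )^{1/2}, where γ = γ_β(A,B), converges to the affine-invariant Riemannian distance δ(A,B) as β → 0, for any fixed symmetric positive-definite A, B. -/

import Mathlib

open Matrix

open Classical in
/-- The affine-invariant Riemannian distance `δ(M,N) = (∑ i, ln² λᵢ)^{1/2}`, where the `λᵢ`
are the eigenvalues of `M⁻¹N`, computed via the symmetric matrix `M^{-1/2} N M^{-1/2}`
(which has the same eigenvalues). Junk value `0` outside the positive-definite cone. -/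
noncomputable def aiDist {n : ℕ} (M N : Matrix (Fin n) (Fin n) ℝ) : ℝ :=
  if hM : M.PosSemidef then
    if h : ((hM.1.eigenvectorUnitary.1 * diagonal ((RCLike.ofReal : ℝ → ℝ) ∘ (√·) ∘ hM.1.eigenvalues) *
        (star hM.1.eigenvectorUnitary : Matrix (Fin n) (Fin n) ℝ))⁻¹ * N *
        (hM.1.eigenvectorUnitary.1 * diagonal ((RCLike.ofReal : ℝ → ℝ) ∘ (√·) ∘ hM.1.eigenvalues) *
        (star hM.1.eigenvectorUnitary : Matrix (Fin n) (Fin n) ℝ))⁻¹).IsHermitian then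
      Real.sqrt (∑ i, Real.log (h.eigenvalues i) ^ 2)
    else 0
  else 0

/-- The measure of linear independence `γ_β(A,B)`. -/
noncomputable def gammaBeta (n : ℕ) (β : ℝ) (A B : Matrix (Fin n) (Fin n) ℝ) : ℝ :=
  |β| / (2 * Real.sqrt (1 / n - β)) *
    aiDist (A.det ^ (-(1:ℝ) / n) • A) (B.det ^ (-(1:ℝ) / n) • B)

/-! With `Ã = det(A)^{-1/n} A`, congruence by `A^{-1/2}` turns `δ(A,B)` into the Euclidean norm
of the logarithms of the eigenvalues of `H = A^{-1/2} B A^{-1/2}`. Replacing `A, B` by `a A, b B`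
replaces `H` by `(b/a) H`, so expanding the square of `ln (b/a) + ln λᵢ` and using
`∑ ln λᵢ = ln det H` gives `δ(A,B)² = δ(Ã,B̃)² + (ln det A - ln det B)² / n`.

On the scalar side, `(det A^{β/2} - det B^{β/2}) / β → (ln det A - ln det B) / 2` and, since
`γ_β / 2 = |β| δ(Ã,B̃) / (4 √(1/n - β))`, also `sin (γ_β / 2) / |β| → δ(Ã,B̃) / (4 √(1/n))`.
Hence `d_β² → (4/n) ((ln det A - ln det B)² / 4 + n δ(Ã,B̃)² / 4) = δ(A,B)²`. -/

open Polynomial in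
theorem Matrix.IsHermitian.sum_eigenvalues_smul {ι 𝕜 : Type*} [Fintype ι] [DecidableEq ι]
    [RCLike 𝕜] {H : Matrix ι ι 𝕜} (hH : H.IsHermitian) {c : ℝ} (hcH : (c • H).IsHermitian)
    (F : ℝ → ℝ) : ∑ i, F (hcH.eigenvalues i) = ∑ i, F (c * hH.eigenvalues i) := by
  have hroots : (c • H).charpoly.roots =
      Finset.univ.val.map fun i ↦ ((c * hH.eigenvalues i : ℝ) : 𝕜) := by
    rw [← cfc_const_mul_id c H hH.isSelfAdjoint, hH.charpoly_cfc_eq,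
      roots_prod _ _ (Finset.prod_ne_zero_iff.mpr fun i _ ↦ X_sub_C_ne_zero _)]
    simp only [roots_X_sub_C, Multiset.bind_singleton]
  rw [hcH.roots_charpoly_eq_eigenvalues] at hroots
  simpa [Multiset.map_map, Function.comp_def] using
    congrArg (fun s ↦ (s.map (F ∘ RCLike.re)).sum) hroots

open scoped MatrixOrder

namespace Matrix

variable {ι : Type*} [Fintype ι] [DecidableEq ι]

theorem PosSemidef.spectral_sqrt_eq_cfcSqrt {M : Matrix ι ι ℝ} (hM : M.PosSemidef) :
    hM.1.eigenvectorUnitary.1 * diagonal ((RCLike.ofReal : ℝ → ℝ) ∘ (√·) ∘ hM.1.eigenvalues) *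
      (star hM.1.eigenvectorUnitary : Matrix ι ι ℝ) = CFC.sqrt M := by
  rw [CFC.sqrt_eq_cfc, cfc_nnreal_eq_real _ M hM.nonneg, hM.1.cfc_eq]
  simp only [IsHermitian.cfc, Unitary.conjStarAlgAut_apply]
  congr 3
  funext i
  simp only [Function.comp_apply, Real.coe_sqrt, Real.coe_toNNReal',
    max_eq_left (hM.eigenvalues_nonneg i)]

theorem PosSemidef.cfcSqrt_smul {M : Matrix ι ι ℝ} (hM : M.PosSemidef) {c : ℝ} (hc : 0 ≤ c) :
    CFC.sqrt (c • M) = √c • CFC.sqrt M := by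
  rw [← CFC.sqrt_sq (√c • CFC.sqrt M) (smul_nonneg (Real.sqrt_nonneg c) (CFC.sqrt_nonneg M)),
    smul_pow, CFC.sq_sqrt M hM.nonneg, Real.sq_sqrt hc]

theorem PosDef.isUnit_cfcSqrt {M : Matrix ι ι ℝ} (hM : M.PosDef) : IsUnit (CFC.sqrt M) :=
  isUnit_of_mul_isUnit_left ((CFC.sqrt_mul_sqrt_self M hM.posSemidef.nonneg).symm ▸ hM.isUnit)

end Matrix

open Matrix

noncomputable def invSqrtConj {ι : Type*} [Fintype ι] [DecidableEq ι] (A B : Matrix ι ι ℝ) :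
    Matrix ι ι ℝ :=
  (CFC.sqrt A)⁻¹ * B * (CFC.sqrt A)⁻¹

section invSqrtConj

variable {ι : Type*} [Fintype ι] [DecidableEq ι] {A B : Matrix ι ι ℝ}

theorem posDef_invSqrtConj (hA : A.PosDef) (hB : B.PosDef) : (invSqrtConj A B).PosDef := by
  have hinv : (CFC.sqrt A)⁻¹ᴴ = (CFC.sqrt A)⁻¹ := (CFC.sqrt_nonneg A).posSemidef.inv.1
  have := hB.conjTranspose_mul_mul_same
    (mulVec_injective_of_isUnit (isUnit_nonsing_inv_iff.mpr hA.isUnit_cfcSqrt))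
  rwa [hinv] at this

theorem det_invSqrtConj (hA : A.PosSemidef) :
    (invSqrtConj A B).det = B.det / A.det := by
  have hsq : (CFC.sqrt A).det ^ 2 = A.det := by rw [← det_pow, CFC.sq_sqrt A hA.nonneg]
  rw [invSqrtConj, det_mul, det_mul, det_nonsing_inv, Ring.inverse_eq_inv', ← hsq]
  ring

theorem invSqrtConj_smul_smul (hA : A.PosDef) {a : ℝ} (ha : 0 < a) (b : ℝ) :
    invSqrtConj (a • A) (b • B) = (b / a) • invSqrtConj A B := by
  have hS := hA.isUnit_cfcSqrt
  let := invertibleOfNonzero (Real.sqrt_pos.mpr ha).ne'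
  rw [invSqrtConj, invSqrtConj, hA.posSemidef.cfcSqrt_smul ha.le,
    Matrix.inv_smul (A := CFC.sqrt A) √a ((isUnit_iff_isUnit_det _).mp hS), invOf_eq_inv]
  simp only [smul_mul_assoc, mul_smul_comm, smul_smul]
  congr 1
  field_simp
  rw [Real.sq_sqrt ha.le, mul_comm]

end invSqrtConj

theorem Real.sum_log_mul_sq {ι : Type*} [Fintype ι] {t : ℝ} (ht : t ≠ 0) {x : ι → ℝ}
    (hx : ∀ i, x i ≠ 0) :
    ∑ i, Real.log (t * x i) ^ 2 =
      ∑ i, Real.log (x i) ^ 2 + 2 * Real.log t * Real.log (∏ i, x i) +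
        Fintype.card ι * Real.log t ^ 2 := by
  simp only [Real.log_mul ht (hx _), add_sq, Finset.sum_add_distrib,
    Real.log_prod fun i _ ↦ hx i, Finset.mul_sum, Finset.sum_const, nsmul_eq_mul,
    Finset.card_univ]
  ring

section aiDist

open Real

variable {n : ℕ} {A B : Matrix (Fin n) (Fin n) ℝ}

theorem aiDist_nonneg (A B : Matrix (Fin n) (Fin n) ℝ) : 0 ≤ aiDist A B := by
  unfold aiDist
  split_ifs <;> positivity

theorem aiDist_eq_sqrt_sum_log_sq (hA : A.PosSemidef) (hH : (invSqrtConj A B).IsHermitian) :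
    aiDist A B = √(∑ i, log (hH.eigenvalues i) ^ 2) := by
  rw [aiDist, dif_pos hA]
  simp only [hA.spectral_sqrt_eq_cfcSqrt]
  exact dif_pos hH

theorem aiDist_smul_smul_sq (hA : A.PosDef) (hB : B.PosDef) {a b : ℝ} (ha : 0 < a)
    (hb : 0 < b) :
    aiDist (a • A) (b • B) ^ 2 =
      aiDist A B ^ 2 + 2 * log (b / a) * log (B.det / A.det) + n * log (b / a) ^ 2 := by
  have hH := posDef_invSqrtConj hA hB
  have hH' := posDef_invSqrtConj (hA.smul ha) (hB.smul hb)
  rw [aiDist_eq_sqrt_sum_log_sq (hA.posSemidef.smul ha.le) hH'.1,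
    aiDist_eq_sqrt_sum_log_sq hA.posSemidef hH.1,
    sq_sqrt (Finset.sum_nonneg fun i _ ↦ sq_nonneg _),
    sq_sqrt (Finset.sum_nonneg fun i _ ↦ sq_nonneg _)]
  revert hH'
  rw [invSqrtConj_smul_smul hA ha b]
  intro hH'
  rw [hH.1.sum_eigenvalues_smul hH'.1 (fun x ↦ log x ^ 2),
    Real.sum_log_mul_sq (div_pos hb ha).ne' fun i ↦ (hH.eigenvalues_pos i).ne',
    ← det_invSqrtConj hA.posSemidef, hH.1.det_eq_prod_eigenvalues, Fintype.card_fin]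
  simp only [ringHom_apply]

theorem aiDist_sq_eq_normalized (hA : A.PosDef) (hB : B.PosDef) :
    aiDist A B ^ 2 =
      aiDist (A.det ^ (-(1:ℝ) / n) • A) (B.det ^ (-(1:ℝ) / n) • B) ^ 2 +
        (log A.det - log B.det) ^ 2 / n := by
  have hdA := hA.det_pos
  have hdB := hB.det_pos
  rw [aiDist_smul_smul_sq hA hB (rpow_pos_of_pos hdA _) (rpow_pos_of_pos hdB _),
    log_div (rpow_pos_of_pos hdB _).ne' (rpow_pos_of_pos hdA _).ne', log_rpow hdA, log_rpow hdB,
    log_div hdB.ne' hdA.ne']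
  field_simp
  ring

end aiDist

open Filter Topology Real

theorem tendsto_rpow_half_sub_rpow_half_div {a b : ℝ} (ha : 0 < a) (hb : 0 < b) :
    Tendsto (fun β : ℝ ↦ (a ^ (β / 2) - b ^ (β / 2)) / β) (𝓝[≠] 0)
      (𝓝 ((log a - log b) / 2)) := by
  have hhalf : HasDerivAt (fun β : ℝ ↦ β / 2) (1 / 2) 0 := (hasDerivAt_id 0).div_const 2
  have hd := ((hhalf.const_rpow ha).sub (hhalf.const_rpow hb)).tendsto_slope_zero
  convert hd using 2 with β
  · simp [div_eq_inv_mul]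
  · simp only [one_div, zero_div, rpow_zero, mul_one]
    ring

theorem tendsto_sin_mul_div {α : Type*} {l : Filter α} {u μ : α → ℝ} {c : ℝ}
    (hu : Tendsto u l (𝓝 0)) (hu0 : ∀ᶠ x in l, u x ≠ 0) (hμ : Tendsto μ l (𝓝 c)) :
    Tendsto (fun x ↦ sin (u x * μ x) / u x) l (𝓝 c) := by
  have hsinc : Tendsto (fun x ↦ μ x * sinc (u x * μ x)) l (𝓝 (c * sinc (0 * c))) :=
    hμ.mul ((continuous_sinc.tendsto _).comp (hu.mul hμ))
  rw [zero_mul, sinc_zero, mul_one] at hsinc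
  refine hsinc.congr' ?_
  filter_upwards [hu0] with x hx
  by_cases hμx : μ x = 0
  · simp [hμx]
  · rw [sinc_of_ne_zero (mul_ne_zero hx hμx)]
    field_simp

theorem div_abs_mul_sqrt_sq_add (c x y K β : ℝ) :
    c / |β| * √(x ^ 2 + K * y ^ 2) = c * √((x / β) ^ 2 + K * (y / |β|) ^ 2) := by
  rcases eq_or_ne β 0 with rfl | hβ
  · simp
  have h : (x / β) ^ 2 + K * (y / |β|) ^ 2 = (x ^ 2 + K * y ^ 2) / β ^ 2 := by
    rw [div_pow, div_pow, sq_abs]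
    ring
  rw [h, sqrt_div' _ (sq_nonneg β), sqrt_sq_eq_abs]
  ring

theorem tendsto_distBeta_scalar {c a b s : ℝ} (hc : 0 < c) (ha : 0 < a) (hb : 0 < b) :
    Tendsto (fun β : ℝ ↦ 2 * √(c - β) / |β| *
        √((a ^ (β / 2) - b ^ (β / 2)) ^ 2 +
          4 * (a * b) ^ (β / 2) * sin (|β| / (2 * √(c - β)) * s / 2) ^ 2))
      (𝓝[≠] 0) (𝓝 √(s ^ 2 + c * (log a - log b) ^ 2)) := by
  set μ : ℝ → ℝ := fun β ↦ s / (4 * √(c - β))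
  have hcont : ContinuousAt (fun β : ℝ ↦ √(c - β)) 0 := by fun_prop
  have hμ : Tendsto μ (𝓝[≠] 0) (𝓝 (μ 0)) := by
    have : 4 * √(c - 0) ≠ 0 := by rw [sub_zero]; positivity
    exact (((continuousAt_const.mul hcont).inv₀ this).const_mul s).tendsto.mono_left
      nhdsWithin_le_nhds
  have hsin := tendsto_sin_mul_div (tendsto_abs_nhdsNE_zero.mono_right nhdsWithin_le_nhds)
    (eventually_nhdsWithin_of_forall fun β hβ ↦ abs_ne_zero.mpr hβ) hμ
  have hpow : Tendsto (fun β : ℝ ↦ (a * b) ^ (β / 2)) (𝓝[≠] 0) (𝓝 1) := by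
    have h : ContinuousAt (fun β : ℝ ↦ (a * b) ^ (β / 2)) 0 :=
      continuousAt_const.rpow (continuousAt_id.div_const 2) (Or.inl (mul_pos ha hb).ne')
    simpa using h.tendsto.mono_left nhdsWithin_le_nhds
  have hlim := ((hcont.tendsto.mono_left nhdsWithin_le_nhds).const_mul 2).mul
    (((tendsto_rpow_half_sub_rpow_half_div ha hb).pow 2).add
      (((tendsto_const_nhds (x := (4 : ℝ))).mul hpow).mul (hsin.pow 2))).sqrt
  convert hlim using 2 with β
  · rw [show |β| / (2 * √(c - β)) * s / 2 = |β| * μ β by ring, div_abs_mul_sqrt_sq_add]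
  · rw [sub_zero, ← sqrt_sq zero_le_two, ← sqrt_mul (sq_nonneg 2), ← sqrt_mul (by positivity)]
    congr 1
    simp only [μ, sub_zero]
    field_simp
    rw [sq_sqrt hc.le]
    ring

open Filter Topology in
theorem distBeta_tendsto_aiDist {n : ℕ} (hn : 0 < n)
    (A B : Matrix (Fin n) (Fin n) ℝ) (hA : A.PosDef) (hB : B.PosDef) :
    Tendsto
      (fun β : ℝ =>
        2 * Real.sqrt (1 / n - β) / |β| *
          Real.sqrt ((A.det ^ (β / 2) - B.det ^ (β / 2)) ^ 2 +
            4 * (A.det * B.det) ^ (β / 2) * Real.sin (gammaBeta n β A B / 2) ^ 2))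
      (𝓝[≠] 0) (𝓝 (aiDist A B)) := by
  have hd : aiDist A B = √(aiDist (A.det ^ (-(1:ℝ) / n) • A) (B.det ^ (-(1:ℝ) / n) • B) ^ 2 +
      1 / n * (log A.det - log B.det) ^ 2) := by
    rw [← sqrt_sq (aiDist_nonneg A B), aiDist_sq_eq_normalized hA hB, one_div_mul_eq_div]
  rw [hd]
  exact tendsto_distBeta_scalar (one_div_pos.mpr (Nat.cast_pos.mpr hn)) hA.det_pos hB.det_pos
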